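/- arXiv:1702.05467 — 2 statements merged into one kernel-verified Lean document; each statement's English description precedes it below -/
import Mathlib

section
/- Every squared-star with exactly 5 faces has signature {3,1,1} or {2,1,1,1}, and each of these two signatures is realized by some squared-star with exactly 5 faces. -/
open scoped Classical
noncomputable section

/-- The vertex set `V = {±1, ±2, ±3, ±4} ⊆ ℤ`. -/
def Vset : Finset ℤ := {1, -1, 2, -2, 3, -3, 4, -4}

/-- An edge of the graph `G₈`: an unordered pair `{u, v}` of elements of `V`
with `|u| ≠ |v|`. -/
def IsFace (e : Finset ℤ) : Prop :=
  ∃ u ∈ Vset, ∃ v ∈ Vset, |u| ≠ |v| ∧ e = {u, v}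

/-- A squared-star: the edge set of a cycle in `G₈`, i.e. a set of at least 3
edges of `G₈` such that every incident vertex is incident to exactly two edges
and any two edges are connected by a chain of successively intersecting edges. -/
def SquaredStar (E : Finset (Finset ℤ)) : Prop :=
  3 ≤ E.card ∧
  (∀ e ∈ E, IsFace e) ∧
  (∀ v : ℤ, (∃ e ∈ E, v ∈ e) → (E.filter fun e => v ∈ e).card = 2) ∧
  ∀ e ∈ E, ∀ f ∈ E,
    Relation.ReflTransGen (fun a b => a ∈ E ∧ b ∈ E ∧ (a ∩ b).Nonempty) e f

/-- The plane of an edge `{u, v}`: the unordered pair `{|u|, |v|}`. -/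
def planeOf (e : Finset ℤ) : Finset ℤ := e.image fun x => |x|

/-- The number of faces of `E` lying in the plane `P`. -/
def planeCount (E : Finset (Finset ℤ)) (P : Finset ℤ) : ℕ :=
  (E.filter fun e => planeOf e = P).card

/-- The signature of a squared-star: the multiset of the numbers of faces in
each plane containing at least one face. -/
def signatureOf (E : Finset (Finset ℤ)) : Multiset ℕ :=
  (E.image planeOf).val.map fun P => planeCount E P

/-- A plane containing exactly two faces of `E` is of adjacent type if those
two faces share a vertex. -/
def AdjacentType (E : Finset (Finset ℤ)) (P : Finset ℤ) : Prop :=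
  planeCount E P = 2 ∧
  ∃ e ∈ E, ∃ f ∈ E, e ≠ f ∧ planeOf e = P ∧ planeOf f = P ∧ (e ∩ f).Nonempty

/-- The number of doubled planes of `E` of adjacent type. -/
def adjDoubledCount (E : Finset (Finset ℤ)) : ℕ :=
  ((E.image planeOf).filter fun P => AdjacentType E P).card

/-- An element of the hyperoctahedral group: a bijection of `V` commuting with
the antipodal map. -/
def IsHyperOct (g : ℤ → ℤ) : Prop :=
  Set.BijOn g ↑Vset ↑Vset ∧ ∀ v ∈ Vset, g (-v) = -g v

/-- The action of a signed permutation on a set of faces. -/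
def actStar (g : ℤ → ℤ) (E : Finset (Finset ℤ)) : Finset (Finset ℤ) :=
  E.image fun e => e.image g

/-- Two squared-stars are equivalent if a signed permutation carries one to the
other. -/
def StarEquiv (E F : Finset (Finset ℤ)) : Prop :=
  ∃ g : ℤ → ℤ, IsHyperOct g ∧ F = actStar g E

/-!
Sending each vertex `v` to `|v|` turns a squared-star into a closed walk on `K₄` on the vertices
`{1, 2, 3, 4}` that crosses the edge `P` exactly `planeCount E P` times. Each `i` lies on the planes
of an even number of faces (those through `i` plus those through `-i`, two or none each), so the
planes of odd count form an edge set of `K₄` with all degrees even. With five faces this set has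
odd size, so it is a triangle, and a partition of `5` with exactly three odd parts is `3 + 1 + 1`
or `2 + 1 + 1 + 1`.
-/

open Finset

lemma List.IsChain.reflTransGen_of_mem {α : Type*} {r : α → α → Prop} [Std.Symm r]
    {l : List α} (hl : l.IsChain r) {a b : α} (ha : a ∈ l) (hb : b ∈ l) :
    Relation.ReflTransGen r a b := by
  obtain _ | ⟨x, t⟩ := l
  · simp at ha
  have hx : ∀ c ∈ x :: t, Relation.ReflTransGen r x c :=
    hl.induction _ _ (fun _ _ hr hxc => hxc.tail hr) fun _ => .refl
  exact (Std.Symm.symm _ _ (hx a ha)).trans (hx b hb)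

lemma Multiset.eq_of_sum_eq_five_of_card_filter_odd {s : Multiset ℕ} (hpos : ∀ n ∈ s, 0 < n)
    (hsum : s.sum = 5) (hodd : Multiset.card (s.filter Odd) = 3) :
    s = {3, 1, 1} ∨ s = {2, 1, 1, 1} := by
  obtain ⟨a, b, c, habc⟩ := Multiset.card_eq_three.mp hodd
  have hodd_abc : Odd a ∧ Odd b ∧ Odd c := by
    have h : ∀ n ∈ s.filter Odd, Odd n := fun n hn => (Multiset.mem_filter.mp hn).2
    simp only [habc, Multiset.insert_eq_cons, Multiset.mem_cons, Multiset.mem_singleton,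
      forall_eq_or_imp, forall_eq] at h
    exact h
  have htwo_le : ∀ n ∈ s.filter (¬Odd ·), 2 ≤ n := by
    intro n hn
    obtain ⟨hns, hn⟩ := Multiset.mem_filter.mp hn
    obtain ⟨k, rfl⟩ := Nat.not_odd_iff_even.mp hn
    have := hpos _ hns
    omega
  have hs : s = {a, b, c} + s.filter (¬Odd ·) := by rw [← habc, Multiset.filter_add_not]
  generalize s.filter (¬Odd ·) = e at hs htwo_le
  subst hs
  have hcard_le : Multiset.card e * 2 ≤ e.sum := Multiset.card_nsmul_le_sum htwo_le
  have hsum' : a + b + c + e.sum = 5 := by simpa [add_assoc] using hsum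
  obtain ⟨⟨a, rfl⟩, ⟨b, rfl⟩, ⟨c, rfl⟩⟩ := hodd_abc
  obtain he | he : Multiset.card e = 0 ∨ Multiset.card e = 1 := by omega
  · obtain rfl := Multiset.card_eq_zero.mp he
    rw [Multiset.sum_zero] at hsum'
    obtain ⟨rfl, rfl, rfl⟩ | ⟨rfl, rfl, rfl⟩ | ⟨rfl, rfl, rfl⟩ :
        (a = 1 ∧ b = 0 ∧ c = 0) ∨ (a = 0 ∧ b = 1 ∧ c = 0) ∨ (a = 0 ∧ b = 0 ∧ c = 1) := by
      omega
    all_goals left; decide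
  · obtain ⟨d, rfl⟩ := Multiset.card_eq_one.mp he
    simp only [Multiset.sum_singleton] at hsum' hcard_le
    obtain ⟨rfl, rfl, rfl, rfl⟩ : a = 0 ∧ b = 0 ∧ c = 0 ∧ d = 2 := by omega
    right; decide

-- An edge set of `K₄` with all degrees even is empty, a triangle or a `4`-cycle.
lemma card_eq_three_of_forall_even_degree :
    ∀ O ⊆ powersetCard 2 ({1, 2, 3, 4} : Finset ℤ),
      (∀ i ∈ ({1, 2, 3, 4} : Finset ℤ), Even #{P ∈ O | i ∈ P}) → Odd #O → #O = 3 := by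
  decide

lemma IsFace.neg_notMem {e : Finset ℤ} (he : IsFace e) {x : ℤ} (hx : x ∈ e) : -x ∉ e := by
  obtain ⟨u, hu, v, hv, huv, rfl⟩ := he
  have h0 : ∀ w ∈ Vset, w ≠ 0 := by decide
  have hu0 := h0 u hu
  have hv0 := h0 v hv
  simp only [mem_insert, mem_singleton] at hx ⊢
  rcases hx with rfl | rfl <;> rintro (h | h)
  · omega
  · exact huv (by rw [← h, abs_neg])
  · exact huv (by rw [← h, abs_neg])
  · omega

lemma IsFace.planeOf_mem {e : Finset ℤ} (he : IsFace e) :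
    planeOf e ∈ powersetCard 2 ({1, 2, 3, 4} : Finset ℤ) := by
  obtain ⟨u, hu, v, hv, huv, rfl⟩ := he
  have habs : ∀ w ∈ Vset, |w| ∈ ({1, 2, 3, 4} : Finset ℤ) := by decide
  rw [planeOf, image_insert, image_singleton, mem_powersetCard, insert_subset_iff,
    singleton_subset_iff]
  exact ⟨⟨habs u hu, habs v hv⟩, card_pair huv⟩

lemma even_card_filter_mem {E : Finset (Finset ℤ)}
    (hdeg : ∀ v : ℤ, (∃ e ∈ E, v ∈ e) → #{e ∈ E | v ∈ e} = 2) (v : ℤ) :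
    Even #{e ∈ E | v ∈ e} := by
  by_cases h : ∃ e ∈ E, v ∈ e
  · rw [hdeg v h]
    exact even_two
  · rw [filter_false_of_mem (by simpa using h), card_empty]
    exact .zero

lemma card_filter_mem_planeOf {E : Finset (Finset ℤ)} (hE : ∀ e ∈ E, IsFace e) {i : ℤ}
    (hi : 0 < i) : #{e ∈ E | i ∈ planeOf e} = #{e ∈ E | i ∈ e} + #{e ∈ E | -i ∈ e} := by
  have hmem : ∀ e, i ∈ planeOf e ↔ i ∈ e ∨ -i ∈ e := by
    simp [planeOf, abs_eq hi.le, and_or_left, exists_or]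
  rw [filter_congr fun e _ => hmem e, filter_or, card_union_of_disjoint]
  exact disjoint_filter.mpr fun e he hie => (hE e he).neg_notMem hie

lemma card_filter_mem_planeOf_eq_sum (E : Finset (Finset ℤ)) (i : ℤ) :
    #{e ∈ E | i ∈ planeOf e} = ∑ P ∈ E.image planeOf with i ∈ P, planeCount E P := by
  rw [card_eq_sum_card_fiberwise (f := planeOf) (t := {P ∈ E.image planeOf | i ∈ P})
    fun e he => by
      simp only [mem_coe, mem_filter] at he ⊢
      exact ⟨mem_image_of_mem _ he.1, he.2⟩]
  refine sum_congr rfl fun P hP => ?_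
  have hiP : i ∈ P := (mem_filter.mp hP).2
  rw [planeCount, filter_filter]
  exact congrArg card (filter_congr fun e _ => and_iff_right_of_imp fun h => h ▸ hiP)

def oddPlanes (E : Finset (Finset ℤ)) : Finset (Finset ℤ) :=
  {P ∈ E.image planeOf | Odd (planeCount E P)}

lemma even_card_filter_mem_oddPlanes {E : Finset (Finset ℤ)} (hE : SquaredStar E) {i : ℤ}
    (hi : 0 < i) : Even #{P ∈ oddPlanes E | i ∈ P} := by
  obtain ⟨-, hface, hdeg, -⟩ := hE
  have h := (even_card_filter_mem hdeg i).add (even_card_filter_mem hdeg (-i))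
  rw [← card_filter_mem_planeOf hface hi, card_filter_mem_planeOf_eq_sum,
    even_sum_iff_even_card_odd, filter_filter] at h
  rwa [oddPlanes, filter_filter, filter_congr fun _ _ => and_comm]

lemma odd_card_oddPlanes {E : Finset (Finset ℤ)} (hE : Odd #E) : Odd #(oddPlanes E) := by
  rwa [card_eq_sum_card_image planeOf E, odd_sum_iff_odd_card_odd] at hE

lemma card_oddPlanes_eq_three {E : Finset (Finset ℤ)} (hE : SquaredStar E) (hodd : Odd #E) :
    #(oddPlanes E) = 3 := by
  refine card_eq_three_of_forall_even_degree _ (fun P hP => ?_)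
    (fun i hi => even_card_filter_mem_oddPlanes hE ?_) (odd_card_oddPlanes hodd)
  · obtain ⟨e, he, rfl⟩ := mem_image.mp (mem_filter.mp hP).1
    exact (hE.2.1 e he).planeOf_mem
  · simp only [mem_insert, mem_singleton] at hi
    omega

lemma sum_signatureOf (E : Finset (Finset ℤ)) : (signatureOf E).sum = #E := by
  rw [signatureOf, sum_map_val, card_eq_sum_card_image planeOf E]
  rfl

lemma pos_of_mem_signatureOf {E : Finset (Finset ℤ)} {n : ℕ} (hn : n ∈ signatureOf E) :
    0 < n := by
  obtain ⟨P, hP, rfl⟩ := Multiset.mem_map.mp hn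
  obtain ⟨e, he, rfl⟩ := mem_image.mp hP
  exact card_pos.mpr ⟨e, mem_filter.mpr ⟨he, rfl⟩⟩

lemma card_filter_odd_signatureOf (E : Finset (Finset ℤ)) :
    Multiset.card ((signatureOf E).filter Odd) = #(oddPlanes E) := by
  rw [signatureOf, Multiset.filter_map, Multiset.card_map, oddPlanes, ← filter_val]
  rfl

lemma signatureOf_eq_of_card_eq_five {E : Finset (Finset ℤ)} (hE : SquaredStar E)
    (h5 : #E = 5) : signatureOf E = {3, 1, 1} ∨ signatureOf E = {2, 1, 1, 1} := by
  refine Multiset.eq_of_sum_eq_five_of_card_filter_odd (fun _ => pos_of_mem_signatureOf)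
    (by rw [sum_signatureOf, h5]) ?_
  rw [card_filter_odd_signatureOf, card_oddPlanes_eq_three hE (by rw [h5]; decide)]

lemma squaredStar_of_isChain (l : List (Finset ℤ)) (h3 : 3 ≤ #l.toFinset)
    (hface : ∀ e ∈ l, IsFace e) (hdeg : ∀ e ∈ l, ∀ v ∈ e, #{f ∈ l.toFinset | v ∈ f} = 2)
    (hchain : l.IsChain fun e f => (e ∩ f).Nonempty) : SquaredStar l.toFinset := by
  refine ⟨h3, fun e he => hface e (List.mem_toFinset.mp he), fun v ⟨e, he, hv⟩ =>
    hdeg e (List.mem_toFinset.mp he) v hv, fun e he f hf => ?_⟩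
  have : Std.Symm fun e f : Finset ℤ =>
      e ∈ l.toFinset ∧ f ∈ l.toFinset ∧ (e ∩ f).Nonempty :=
    ⟨fun e f ⟨he, hf, hef⟩ => ⟨hf, he, by rwa [inter_comm]⟩⟩
  refine (List.IsChain.iff_mem.mp hchain |>.imp ?_).reflTransGen_of_mem
    (List.mem_toFinset.mp he) (List.mem_toFinset.mp hf)
  exact fun e f ⟨he, hf, hef⟩ =>
    ⟨List.mem_toFinset.mpr he, List.mem_toFinset.mpr hf, hef⟩

/-- A squared-star with exactly 5 faces has signature `{3,1,1}` or `{2,1,1,1}`,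
and each of these signatures is realized. -/
theorem signature_five_faces :
    (∀ E : Finset (Finset ℤ), SquaredStar E → E.card = 5 →
      signatureOf E = {3, 1, 1} ∨ signatureOf E = {2, 1, 1, 1}) ∧
    (∃ E : Finset (Finset ℤ), SquaredStar E ∧ E.card = 5 ∧
      signatureOf E = {3, 1, 1}) ∧
    (∃ E : Finset (Finset ℤ), SquaredStar E ∧ E.card = 5 ∧
      signatureOf E = {2, 1, 1, 1}) := by
  refine ⟨fun E hE h5 => signatureOf_eq_of_card_eq_five hE h5, ?_, ?_⟩
  · refine ⟨[{1, 2}, {2, -1}, {-1, -2}, {-2, 3}, {3, 1}].toFinset,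
      squaredStar_of_isChain _ (by decide) (by unfold IsFace; decide) (by decide) (by decide),
      by decide, by decide⟩
  · refine ⟨[{1, 2}, {2, 3}, {3, 4}, {4, -2}, {-2, 1}].toFinset,
      squaredStar_of_isChain _ (by decide) (by unfold IsFace; decide) (by decide) (by decide),
      by decide, by decide⟩
end
end

section
/- If a plane contains exactly two faces of a squared-star E and those two faces are disjoint (opposite type, i.e., of the form {a,b} and {-a,-b}), then E has at least 6 faces. -/
/-!
Let `e`, `f` be the two disjoint faces in the plane `P`; they have four vertices in total.
Each of these vertices lies on exactly two faces, and as `e` and `f` are the only faces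
in `P`, its second face leaves `P`. A face outside `P` cannot contain two vertices of
`e ∪ f`, for then its plane would be `P`. Hence at least four faces lie outside `P`, in
addition to `e` and `f`.
-/

open scoped Classical
noncomputable section

open Finset

lemma IsFace.card_eq_two {e : Finset ℤ} (he : IsFace e) : e.card = 2 := by
  obtain ⟨u, -, v, -, huv, rfl⟩ := he
  exact card_pair fun h => huv (h ▸ rfl)

lemma IsFace.card_planeOf {e : Finset ℤ} (he : IsFace e) : (planeOf e).card = 2 := by
  obtain ⟨u, -, v, -, huv, rfl⟩ := he
  simpa [planeOf] using card_pair huv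

lemma IsFace.planeOf_eq_of_two_mem {g s P : Finset ℤ} (hg : IsFace g) (hP : P.card = 2)
    (hs : planeOf s ⊆ P) {x y : ℤ} (hx : x ∈ g ∩ s) (hy : y ∈ g ∩ s) (hxy : x ≠ y) :
    planeOf g = P := by
  rw [mem_inter] at hx hy
  have hg_eq : g = {x, y} :=
    (eq_of_subset_of_card_le (insert_subset hx.1 (singleton_subset_iff.2 hy.1))
      (by rw [hg.card_eq_two, card_pair hxy])).symm
  have hgs : g ⊆ s := hg_eq ▸ insert_subset hx.2 (singleton_subset_iff.2 hy.2)
  exact eq_of_subset_of_card_le ((image_subset_image hgs).trans hs)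
    (by rw [hP, hg.card_planeOf])

lemma SquaredStar.isFace {E : Finset (Finset ℤ)} (hE : SquaredStar E) {e : Finset ℤ}
    (he : e ∈ E) : IsFace e :=
  hE.2.1 e he

lemma SquaredStar.exists_mem_ne {E : Finset (Finset ℤ)} (hE : SquaredStar E) {e : Finset ℤ}
    (he : e ∈ E) {x : ℤ} (hx : x ∈ e) : ∃ g ∈ E, x ∈ g ∧ g ≠ e := by
  obtain ⟨g, hg, hge⟩ := Finset.exists_mem_ne (hE.2.2.1 x ⟨e, he, hx⟩).ge e
  exact ⟨g, (mem_filter.1 hg).1, (mem_filter.1 hg).2, hge⟩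

lemma filter_planeOf_eq_pair {E : Finset (Finset ℤ)} {P e f : Finset ℤ}
    (hP : planeCount E P = 2) (he : e ∈ E) (hf : f ∈ E) (hef : e ≠ f)
    (hpe : planeOf e = P) (hpf : planeOf f = P) :
    E.filter (fun g => planeOf g = P) = {e, f} :=
  (eq_of_subset_of_card_le
    (insert_subset (mem_filter.2 ⟨he, hpe⟩) (singleton_subset_iff.2 (mem_filter.2 ⟨hf, hpf⟩)))
    (by rw [← planeCount, hP, card_pair hef])).symm

lemma SquaredStar.exists_mem_planeOf_ne {E : Finset (Finset ℤ)} (hE : SquaredStar E)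
    {P e f : Finset ℤ} (hP : planeCount E P = 2) (he : e ∈ E) (hf : f ∈ E) (hef : e ≠ f)
    (hpe : planeOf e = P) (hpf : planeOf f = P) {x : ℤ} (hxe : x ∈ e) (hxf : x ∉ f) :
    ∃ g ∈ E, x ∈ g ∧ planeOf g ≠ P := by
  obtain ⟨g, hg, hxg, hge⟩ := hE.exists_mem_ne he hxe
  refine ⟨g, hg, hxg, fun hpg => ?_⟩
  have : g ∈ ({e, f} : Finset _) :=
    filter_planeOf_eq_pair hP he hf hef hpe hpf ▸ mem_filter.2 ⟨hg, hpg⟩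
  rcases mem_insert.1 this with rfl | hgf
  · exact hge rfl
  · exact hxf (mem_singleton.1 hgf ▸ hxg)

lemma SquaredStar.card_union_le_card_filter_planeOf_ne {E : Finset (Finset ℤ)}
    (hE : SquaredStar E) {P e f : Finset ℤ} (hP : planeCount E P = 2) (he : e ∈ E) (hf : f ∈ E)
    (hef : e ≠ f) (hpe : planeOf e = P) (hpf : planeOf f = P) (hdisj : Disjoint e f) :
    (e ∪ f).card ≤ (E.filter fun g => planeOf g ≠ P).card := by
  refine card_le_card_of_forall_subsingleton (· ∈ ·) (fun x hx => ?_) (fun g hg x hx y hy => ?_)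
  · have hvertex : ∃ g ∈ E, x ∈ g ∧ planeOf g ≠ P := by
      rcases mem_union.1 hx with hxe | hxf
      · exact hE.exists_mem_planeOf_ne hP he hf hef hpe hpf hxe (disjoint_left.1 hdisj hxe)
      · exact hE.exists_mem_planeOf_ne hP hf he hef.symm hpf hpe hxf (disjoint_right.1 hdisj hxf)
    obtain ⟨g, hg, hxg, hpg⟩ := hvertex
    exact ⟨g, mem_filter.2 ⟨hg, hpg⟩, hxg⟩
  · have hPcard : P.card = 2 := hpe ▸ (hE.isFace he).card_planeOf
    have hplanes : planeOf (e ∪ f) ⊆ P := by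
      rw [planeOf, image_union]
      exact union_subset hpe.le hpf.le
    rw [mem_filter] at hg
    by_contra hxy
    exact hg.2 <| (hE.isFace hg.1).planeOf_eq_of_two_mem hPcard hplanes
      (mem_inter.2 ⟨hx.2, hx.1⟩) (mem_inter.2 ⟨hy.2, hy.1⟩) hxy

/-- If a plane contains exactly two faces of a squared-star and those two faces
are disjoint (opposite type), then the squared-star has at least 6 faces. -/
theorem opposite_type_needs_six_faces (E : Finset (Finset ℤ))
    (hE : SquaredStar E) (P : Finset ℤ) (hP : planeCount E P = 2)
    (hopp : ∃ e ∈ E, ∃ f ∈ E, e ≠ f ∧ planeOf e = P ∧ planeOf f = P ∧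
      e ∩ f = ∅) :
    6 ≤ E.card := by
  obtain ⟨e, he, f, hf, hef, hpe, hpf, hdisj⟩ := hopp
  have hdisj' : Disjoint e f := disjoint_iff_inter_eq_empty.2 hdisj
  have houtside := hE.card_union_le_card_filter_planeOf_ne hP he hf hef hpe hpf hdisj'
  rw [card_union_of_disjoint hdisj', (hE.isFace he).card_eq_two,
    (hE.isFace hf).card_eq_two] at houtside
  have hsplit : planeCount E P + (E.filter fun g => planeOf g ≠ P).card = E.card :=
    card_filter_add_card_filter_not _
  omega
end
end
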